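/- (Binet's formula for bicomplex Pell–Lucas numbers) For every natural number n, BPL(n) = α̂·αⁿ + β̂·βⁿ, where the real scalars αⁿ and βⁿ act on ℂ ⊗[ℝ] ℂ by scalar multiplication. -/
import Mathlib


open scoped TensorProduct

noncomputable def bi : ℂ ⊗[ℝ] ℂ := Complex.I ⊗ₜ[ℝ] 1
noncomputable def bj : ℂ ⊗[ℝ] ℂ := (1 : ℂ) ⊗ₜ[ℝ] Complex.I
noncomputable def bij : ℂ ⊗[ℝ] ℂ := Complex.I ⊗ₜ[ℝ] Complex.I

/-- The bicomplex Pell-Lucas number `BPL n = Q n + Q (n+1) i + Q (n+2) j + Q (n+3) ij`. -/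
noncomputable def BPL (Q : ℤ → ℤ) (n : ℤ) : ℂ ⊗[ℝ] ℂ :=
  (Q n : ℝ) • (1 : ℂ ⊗[ℝ] ℂ) + (Q (n + 1) : ℝ) • bi + (Q (n + 2) : ℝ) • bj +
    (Q (n + 3) : ℝ) • bij

noncomputable def pellAlpha : ℝ := 1 + Real.sqrt 2
noncomputable def pellBeta : ℝ := 1 - Real.sqrt 2

noncomputable def alphaHat : ℂ ⊗[ℝ] ℂ :=
  1 + pellAlpha • bi + (pellAlpha ^ 2) • bj + (pellAlpha ^ 3) • bij

noncomputable def betaHat : ℂ ⊗[ℝ] ℂ :=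
  1 + pellBeta • bi + (pellBeta ^ 2) • bj + (pellBeta ^ 3) • bij

lemma pellAlpha_sq : pellAlpha ^ 2 = 2 * pellAlpha + 1 := by
  have h : Real.sqrt 2 ^ 2 = 2 := Real.sq_sqrt (by norm_num)
  unfold pellAlpha; ring_nf; nlinarith [h]

lemma pellBeta_sq : pellBeta ^ 2 = 2 * pellBeta + 1 := by
  have h : Real.sqrt 2 ^ 2 = 2 := Real.sq_sqrt (by norm_num)
  unfold pellBeta; ring_nf; nlinarith [h]

lemma pell_key (Q : ℤ → ℤ)
    (hQ : ∀ n : ℤ, Q (n + 2) = 2 * Q (n + 1) + Q n) (hQ0 : Q 0 = 2) (hQ1 : Q 1 = 2) :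
    ∀ n : ℕ, (Q (n : ℤ) : ℝ) = pellAlpha ^ n + pellBeta ^ n := by
  intro n
  induction n using Nat.twoStepInduction with
  | zero => simp [hQ0, pellAlpha, pellBeta]; ring
  | one =>
    simp only [Nat.cast_one, hQ1, pellAlpha, pellBeta]
    push_cast; ring
  | more k ih1 ih2 =>
    have h := hQ (k : ℤ)
    have hc : ((k : ℤ) + 2) = ((k + 2 : ℕ) : ℤ) := by push_cast; ring
    have hc1 : ((k : ℤ) + 1) = ((k + 1 : ℕ) : ℤ) := by push_cast; ring
    rw [hc, hc1] at h
    rw [h]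
    push_cast at ih2 ⊢
    rw [ih1, ih2]
    have ha := pellAlpha_sq
    have hb := pellBeta_sq
    have : pellAlpha ^ (k + 2) = (2 * pellAlpha + 1) * pellAlpha ^ k := by
      rw [← ha]; ring
    rw [this]
    have : pellBeta ^ (k + 2) = (2 * pellBeta + 1) * pellBeta ^ k := by
      rw [← hb]; ring
    rw [this]
    ring

theorem bicomplexPellLucas_binet (Q : ℤ → ℤ)
    (hQ : ∀ n : ℤ, Q (n + 2) = 2 * Q (n + 1) + Q n) (hQ0 : Q 0 = 2) (hQ1 : Q 1 = 2)
    (n : ℕ) :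
    BPL Q (n : ℤ) = (pellAlpha ^ n) • alphaHat + (pellBeta ^ n) • betaHat := by
  have key := pell_key Q hQ hQ0 hQ1
  have h0 := key n
  have h1 : (Q ((n : ℤ) + 1) : ℝ) = pellAlpha ^ (n + 1) + pellBeta ^ (n + 1) := by
    have := key (n + 1); push_cast at this ⊢; convert this using 3 <;> push_cast <;> ring
  have h2 : (Q ((n : ℤ) + 2) : ℝ) = pellAlpha ^ (n + 2) + pellBeta ^ (n + 2) := by
    have := key (n + 2); push_cast at this ⊢; convert this using 3 <;> push_cast <;> ring
  have h3 : (Q ((n : ℤ) + 3) : ℝ) = pellAlpha ^ (n + 3) + pellBeta ^ (n + 3) := by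
    have := key (n + 3); push_cast at this ⊢; convert this using 3 <;> push_cast <;> ring
  unfold BPL alphaHat betaHat
  rw [h0, h1, h2, h3]
  simp only [smul_add, smul_smul, pow_add, pow_succ]
  module
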